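/- arXiv:1312.2196 — 2 statements merged into one kernel-verified Lean document; each statement's English description precedes it below -/
import Mathlib

section
/- For every z ∈ ℂ, every j ≥ 0 and every complex n×n matrix F_j, the system of matrix equations Q_j(z)X + P_j(z)Y = O and A_{j,j+1}(Q_{j+1}(z)X + P_{j+1}(z)Y) = F_j in the unknown n×n matrices X, Y has the unique solution X = −P⁺_j(z)F_j and Y = Q⁺_j(z)F_j. -/
open Matrix Filter
open scoped BigOperators ENNReal

/-- Square `n × n` complex matrices. -/
abbrev Mat (n : ℕ) := Matrix (Fin n) (Fin n) ℂ

/-- `Alo b j` is the coefficient `A_{j,j-1}` (so `Alo b 0 = A_{0,-1} = -E` and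
`Alo b (j+1) = A_{j+1,j} = b j`). -/
def Alo {n : ℕ} (b : ℕ → Mat n) : ℕ → Mat n
  | 0 => -1
  | j + 1 => b j

/-- `Aup a j` is the coefficient `A_{j-1,j}` (so `Aup a 0 = A_{-1,0} = -E` and
`Aup a (j+1) = A_{j,j+1} = a j`). -/
def Aup {n : ℕ} (a : ℕ → Mat n) : ℕ → Mat n
  | 0 => -1
  | j + 1 => a j

/-- Matrix equation (1).  Sequences are indexed by `ℕ`, where index `k` represents the
paper index `k - 1` (so index `0` is the paper index `-1`).  Here `d j = A_{j,j}`,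
`a j = A_{j,j+1}`, `b j = A_{j+1,j}`. -/
def SolEq1 {n : ℕ} (d a b : ℕ → Mat n) (z : ℂ) (Y : ℕ → Mat n) : Prop :=
  ∀ j : ℕ, Alo b j * Y j + d j * Y (j + 1) + a j * Y (j + 2) = z • Y (j + 1)

/-- Matrix equation (2), with the same index shift. -/
def SolEq2 {n : ℕ} (d a b : ℕ → Mat n) (z : ℂ) (Y : ℕ → Mat n) : Prop :=
  ∀ j : ℕ, Y j * Aup a j + Y (j + 1) * d j + Y (j + 2) * b j = z • Y (j + 1)

/-- Vector equation (1v), with the same index shift. -/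
def SolEq1v {n : ℕ} (d a b : ℕ → Mat n) (z : ℂ) (u : ℕ → Fin n → ℂ) : Prop :=
  ∀ j : ℕ, Alo b j *ᵥ u j + d j *ᵥ u (j + 1) + a j *ᵥ u (j + 2) = z • u (j + 1)

/-- Vector equation (2v) for the row vectors `v_j^*`, with the same index shift. -/
def SolEq2v {n : ℕ} (d a b : ℕ → Mat n) (z : ℂ) (v : ℕ → Fin n → ℂ) : Prop :=
  ∀ j : ℕ, star (v j) ᵥ* Aup a j + star (v (j + 1)) ᵥ* d j + star (v (j + 2)) ᵥ* b j
    = z • star (v (j + 1))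

/-! The Wronskians `W(Y⁺, Y)` of the four pairs formed from `P⁺, Q⁺` and `P, Q` are constant in `j`
and, by the initial conditions, equal to `0, -1, 1, 0`. Read at index `j`, these four identities say
that a block matrix built from `P⁺_j, Q⁺_j, P⁺_{j+1}, Q⁺_{j+1}` is a left inverse of the block matrix
of the system; a one-sided inverse of a square matrix over a commutative ring is two-sided, and the
system is solved by multiplying with it. -/

/-- The Wronskian `W(Y⁺, Y)_j = Y⁺_j A_{j,j+1} Y_{j+1} - Y⁺_{j+1} A_{j+1,j} Y_j`, in the shifted
indexing of `SolEq1`, `SolEq2`. -/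
def wronskian {n : ℕ} (a b : ℕ → Mat n) (Yp Y : ℕ → Mat n) (j : ℕ) : Mat n :=
  Yp j * Aup a j * Y (j + 1) - Yp (j + 1) * Alo b j * Y j

lemma wronskian_succ {n : ℕ} (a b : ℕ → Mat n) (Yp Y : ℕ → Mat n) (j : ℕ) :
    wronskian a b Yp Y (j + 1) = Yp (j + 1) * a j * Y (j + 2) - Yp (j + 2) * b j * Y (j + 1) :=
  rfl

lemma wronskian_eq_wronskian_zero {n : ℕ} {d a b : ℕ → Mat n} {z : ℂ} {Yp Y : ℕ → Mat n}
    (hY : SolEq1 d a b z Y) (hYp : SolEq2 d a b z Yp) (j : ℕ) :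
    wronskian a b Yp Y j = wronskian a b Yp Y 0 := by
  induction j with
  | zero => rfl
  | succ j ih =>
    rw [← ih, wronskian_succ]
    show _ = Yp j * Aup a j * Y (j + 1) - Yp (j + 1) * Alo b j * Y j
    linear_combination (norm := noncomm_ring) Yp (j + 1) * hY j - hYp j * Y (j + 1)

lemma wronskian_zero {n : ℕ} (a b : ℕ → Mat n) (Yp Y : ℕ → Mat n) :
    wronskian a b Yp Y 0 = Yp 1 * Y 0 - Yp 0 * Y 1 := by
  simp only [wronskian, Aup, Alo]
  noncomm_ring

lemma fromBlocks_system_iff {m R : Type*} [Fintype m] [DecidableEq m] [CommRing R]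
    {A B C D A' B' C' D' : Matrix m m R}
    (h : fromBlocks A' B' C' D' * fromBlocks A B C D = 1) (X Y F : Matrix m m R) :
    (A * X + B * Y = 0 ∧ C * X + D * Y = F) ↔ (X = B' * F ∧ Y = D' * F) := by
  have h' := mul_eq_one_comm.mp h
  rw [fromBlocks_multiply, ← fromBlocks_one, fromBlocks_inj] at h h'
  obtain ⟨h₁₁, h₁₂, h₂₁, h₂₂⟩ := h
  obtain ⟨-, h₁₂', -, h₂₂'⟩ := h'
  constructor
  · rintro ⟨e₁, e₂⟩
    constructor
    · linear_combination (norm := noncomm_ring) A' * e₁ + B' * e₂ - h₁₁ * X - h₁₂ * Y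
    · linear_combination (norm := noncomm_ring) C' * e₁ + D' * e₂ - h₂₁ * X - h₂₂ * Y
  · rintro ⟨rfl, rfl⟩
    constructor
    · linear_combination (norm := noncomm_ring) h₁₂' * F
    · linear_combination (norm := noncomm_ring) h₂₂' * F

theorem statement2_general {n : ℕ} (d a b : ℕ → Mat n) (z : ℂ)
    (P Q Pp Qp : ℕ → Mat n)
    (hP : SolEq1 d a b z P) (hQ : SolEq1 d a b z Q)
    (hPp : SolEq2 d a b z Pp) (hQp : SolEq2 d a b z Qp)
    (hP0 : P 0 = 1) (hP1 : P 1 = 0) (hQ0 : Q 0 = 0) (hQ1 : Q 1 = 1)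
    (hPp0 : Pp 0 = 1) (hPp1 : Pp 1 = 0) (hQp0 : Qp 0 = 0) (hQp1 : Qp 1 = 1)
    (j : ℕ) (F : Mat n) (X Y : Mat n) :
    (Q (j + 1) * X + P (j + 1) * Y = 0 ∧
      a j * (Q (j + 2) * X + P (j + 2) * Y) = F) ↔
    (X = -(Pp (j + 1) * F) ∧ Y = Qp (j + 1) * F) := by
  have wPpP := wronskian_eq_wronskian_zero hP hPp (j + 1)
  have wPpQ := wronskian_eq_wronskian_zero hQ hPp (j + 1)
  have wQpP := wronskian_eq_wronskian_zero hP hQp (j + 1)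
  have wQpQ := wronskian_eq_wronskian_zero hQ hQp (j + 1)
  simp only [wronskian_succ, wronskian_zero, hP0, hP1, hQ0, hQ1, hPp0, hPp1, hQp0, hQp1,
    mul_one, mul_zero, sub_zero, zero_sub] at wPpP wPpQ wQpP wQpQ
  have hinv : fromBlocks (Pp (j + 2) * b j) (-Pp (j + 1)) (-(Qp (j + 2) * b j)) (Qp (j + 1)) *
      fromBlocks (Q (j + 1)) (P (j + 1)) (a j * Q (j + 2)) (a j * P (j + 2)) = 1 := by
    rw [fromBlocks_multiply, ← fromBlocks_one]
    congr 1
    · linear_combination (norm := noncomm_ring) -wPpQ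
    · linear_combination (norm := noncomm_ring) -wPpP
    · linear_combination (norm := noncomm_ring) wQpQ
    · linear_combination (norm := noncomm_ring) wQpP
  rw [mul_add, ← Matrix.mul_assoc, ← Matrix.mul_assoc, fromBlocks_system_iff hinv, neg_mul]

/-- the variation-of-constants system has the unique solution
`X = -P⁺_j(z) F_j`, `Y = Q⁺_j(z) F_j`. -/
theorem statement2 {n : ℕ} (hn : 1 ≤ n) (d a b : ℕ → Mat n)
    (ha : ∀ j, IsUnit (a j)) (hb : ∀ j, IsUnit (b j)) (z : ℂ)
    (P Q Pp Qp : ℕ → Mat n)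
    (hP : SolEq1 d a b z P) (hQ : SolEq1 d a b z Q)
    (hPp : SolEq2 d a b z Pp) (hQp : SolEq2 d a b z Qp)
    (hP0 : P 0 = 1) (hP1 : P 1 = 0) (hQ0 : Q 0 = 0) (hQ1 : Q 1 = 1)
    (hPp0 : Pp 0 = 1) (hPp1 : Pp 1 = 0) (hQp0 : Qp 0 = 0) (hQp1 : Qp 1 = 1)
    (j : ℕ) (F : Mat n) (X Y : Mat n) :
    (Q (j + 1) * X + P (j + 1) * Y = 0 ∧
      a j * (Q (j + 2) * X + P (j + 2) * Y) = F) ↔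
    (X = -(Pp (j + 1) * F) ∧ Y = Qp (j + 1) * F) :=
  statement2_general d a b z P Q Pp Qp hP hQ hPp hQp hP0 hP1 hQ0 hQ1 hPp0 hPp1 hQp0 hQp1 j F X Y
end

section
/- (Theorem 1.) Let 1 ≤ p ≤ ∞ and let q be its conjugate exponent, 1/p + 1/q = 1. Suppose that for some z_0 ∈ ℂ every solution of the vector equation (1v) at z_0 belongs to l^p_n and every solution of the vector equation (2v) at z_0 belongs to l^q_n. Then for every z ∈ ℂ, every solution of (1v) at z belongs to l^p_n and every solution of (2v) at z belongs to l^q_n. -/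
open Matrix Filter
open scoped BigOperators ENNReal

/-!
Variation of constants around `z₀`. Let `P, Q` be the matrix solutions of (1) at `z₀` and
`Pt, Qt` those of (2), normalised so that their mixed Wronskians are `0` and `±1`; then
`K m k = P m * Qt k - Q m * Pt k` is a Green kernel, and a solution `u` of (1v) at `z` satisfies
`u m = P m u₁ - Q m u₀ + (z - z₀) ∑_{1 ≤ k < m} K m k u k`.
The columns of `P, Q` lie in `ℓ^p` and the rows of `Pt, Qt` in `ℓ^q`, so `‖K m k‖ ≤ α m β k`
with `α ∈ ℓ^p`, `β ∈ ℓ^q`, and `α β` is summable by Hölder. The discrete Grönwall inequality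
then gives `‖u m‖ ≤ C α m`, hence `u ∈ ℓ^p`. Equation (2v) is (1v) for the transposed
coefficients, with the roles of `p` and `q` exchanged.
-/

open scoped Matrix.Norms.Operator

open Finset in
theorem le_mul_exp_of_le_mul_add_sum {α β x : ℕ → ℝ} {W : ℝ} (hα : ∀ k, 0 ≤ α k)
    (hβ : ∀ k, 0 ≤ β k) (hW : 0 ≤ W) (hαβ : Summable fun k => α k * β k)
    (hx : ∀ m, x m ≤ α m * (W + ∑ k ∈ range m, β k * x k)) (m : ℕ) :
    x m ≤ W * Real.exp (∑' k, α k * β k) * α m := by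
  set S : ℕ → ℝ := fun m => W + ∑ k ∈ range m, β k * x k
  have hS : ∀ m ≥ 0, S (m + 1) ≤ (1 + α m * β m) * S m + 0 := fun m _ => by
    have := mul_le_mul_of_nonneg_left (hx m) (hβ m)
    simp only [S, sum_range_succ]
    linarith
  have hgron := discrete_gronwall (n₀ := 0) (by simpa [S] using hW) hS
    (fun k _ => mul_nonneg (hα k) (hβ k)) (fun _ _ => le_rfl) (Nat.zero_le m)
  simp only [S, ← range_eq_Ico, range_zero, sum_empty, sum_const_zero, add_zero] at hgron
  have htsum : ∑ k ∈ range m, α k * β k ≤ ∑' k, α k * β k :=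
    hαβ.sum_le_tsum _ fun k _ => mul_nonneg (hα k) (hβ k)
  calc x m ≤ α m * S m := hx m
    _ ≤ α m * (W * Real.exp (∑' k, α k * β k)) := by
      gcongr
      · exact hα m
      · exact hgron.trans (by gcongr)
    _ = _ := by ring

theorem Memℓp.summable_mul {ι : Type*} {p q : ℝ≥0∞} [p.HolderConjugate q] {f g : ι → ℝ}
    (hf : Memℓp f p) (hg : Memℓp g q) : Summable fun i => f i * g i :=
  (hf.holder 1 hg (fun _ => ContinuousLinearMap.mul ℝ ℝ)
    fun _ => ContinuousLinearMap.opNorm_mul_le ℝ ℝ).summable_of_one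

theorem Matrix.linfty_opNorm_le_sum_norm {m k α : Type*} [Fintype m] [Fintype k]
    [SeminormedAddCommGroup α] (A : Matrix m k α) : ‖A‖ ≤ ∑ i, ∑ j, ‖A i j‖ := by
  have h : ‖A‖₊ ≤ ∑ i, ∑ j, ‖A i j‖₊ := by
    rw [linfty_opNNNorm_def]
    exact Finset.sup_le fun i _ =>
      Finset.single_le_sum (f := fun i => ∑ j, ‖A i j‖₊) (fun _ _ => bot_le) (Finset.mem_univ i)
  simpa using NNReal.coe_le_coe.mpr h

theorem memℓp_of_forall_memℓp_apply {ι m k α : Type*} [Fintype m] [Fintype k]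
    [NormedAddCommGroup α] {p : ℝ≥0∞} {Y : ι → Matrix m k α}
    (h : ∀ i j, Memℓp (fun t => Y t i j) p) : Memℓp Y p :=
  (Memℓp.finsetSum _ fun i _ => Memℓp.finsetSum _ fun j _ => (h i j).norm).mono
    fun t => by simpa using Matrix.linfty_opNorm_le_sum_norm (Y t)

/-- The four Wronskian identities say `L * C = [[0, 1], [-1, 0]]` for the block matrices
`C = [[P, Q], [P', Q']]` and `L = [[Pt' Al, -Pt Au], [Qt' Al, -Qt Au]]`; a one-sided inverse of
a square matrix is two-sided, and the off-diagonal blocks of `C * L = ...` are the claim. -/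
theorem Matrix.mul_sub_mul_of_wronskian {ι R : Type*} [Fintype ι] [DecidableEq ι] [CommRing R]
    {Al Au P Q P' Q' Pt Qt Pt' Qt' : Matrix ι ι R}
    (h₁ : Pt' * Al * P - Pt * Au * P' = 0) (h₂ : Pt' * Al * Q - Pt * Au * Q' = 1)
    (h₃ : Qt' * Al * P - Qt * Au * P' = -1) (h₄ : Qt' * Al * Q - Qt * Au * Q' = 0) :
    P * Qt - Q * Pt = 0 ∧ (P' * Qt - Q' * Pt) * Au = 1 := by
  have hLC : fromBlocks (Pt' * Al) (-(Pt * Au)) (Qt' * Al) (-(Qt * Au)) * fromBlocks P Q P' Q' =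
      fromBlocks 0 1 (-1) 0 := by
    simp only [fromBlocks_multiply, Matrix.neg_mul, ← sub_eq_add_neg, h₁, h₂, h₃, h₄]
  have hJLC : fromBlocks 0 (-1) 1 0 * fromBlocks (Pt' * Al) (-(Pt * Au)) (Qt' * Al) (-(Qt * Au)) *
      fromBlocks P Q P' Q' = 1 := by
    rw [Matrix.mul_assoc, hLC, fromBlocks_multiply, ← fromBlocks_one]
    simp
  have hCJL := mul_eq_one_comm.mp hJLC
  simp only [fromBlocks_multiply, ← fromBlocks_one, fromBlocks_inj] at hCJL
  obtain ⟨-, h₁₂, -, h₂₂⟩ := hCJL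
  have hK : (P * Qt - Q * Pt) * Au = 0 := by rw [← h₁₂]; noncomm_ring
  have hK' : (P' * Qt - Q' * Pt) * Au = 1 := by rw [← h₂₂]; noncomm_ring
  refine ⟨?_, hK'⟩
  calc P * Qt - Q * Pt = (P * Qt - Q * Pt) * (Au * (P' * Qt - Q' * Pt)) := by
        rw [mul_eq_one_comm.mp hK', Matrix.mul_one]
    _ = 0 := by rw [← Matrix.mul_assoc, hK, Matrix.zero_mul]

noncomputable def fundSol1 {n : ℕ} (d a b : ℕ → Mat n) (z : ℂ) (Y₀ Y₁ : Mat n) : ℕ → Mat n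
  | 0 => Y₀
  | 1 => Y₁
  | j + 2 => (a j)⁻¹ * (z • fundSol1 d a b z Y₀ Y₁ (j + 1) - Alo b j * fundSol1 d a b z Y₀ Y₁ j
      - d j * fundSol1 d a b z Y₀ Y₁ (j + 1))

noncomputable def fundSol2 {n : ℕ} (d a b : ℕ → Mat n) (z : ℂ) (Y₀ Y₁ : Mat n) : ℕ → Mat n
  | 0 => Y₀
  | 1 => Y₁
  | j + 2 => (z • fundSol2 d a b z Y₀ Y₁ (j + 1) - fundSol2 d a b z Y₀ Y₁ j * Aup a j
      - fundSol2 d a b z Y₀ Y₁ (j + 1) * d j) * (b j)⁻¹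

section Recurrence

variable {n : ℕ} {d a b : ℕ → Mat n} {z : ℂ}

theorem solEq1_fundSol1 (ha : ∀ j, IsUnit (a j)) (Y₀ Y₁ : Mat n) :
    SolEq1 d a b z (fundSol1 d a b z Y₀ Y₁) := by
  intro j
  rw [fundSol1, mul_nonsing_inv_cancel_left _ _ ((isUnit_iff_isUnit_det _).mp (ha j))]
  abel

theorem solEq2_fundSol2 (hb : ∀ j, IsUnit (b j)) (Y₀ Y₁ : Mat n) :
    SolEq2 d a b z (fundSol2 d a b z Y₀ Y₁) := by
  intro j
  rw [fundSol2, nonsing_inv_mul_cancel_right _ _ ((isUnit_iff_isUnit_det _).mp (hb j))]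
  abel

theorem SolEq1.solEq1v_mulVec {Y : ℕ → Mat n} (h : SolEq1 d a b z Y) (x : Fin n → ℂ) :
    SolEq1v d a b z (fun m => Y m *ᵥ x) := fun j => by
  simpa only [add_mulVec, smul_mulVec, mulVec_mulVec] using congrArg (· *ᵥ x) (h j)

theorem SolEq2.solEq2v_star_row {Y : ℕ → Mat n} (h : SolEq2 d a b z Y) (i : Fin n) :
    SolEq2v d a b z (fun m => star (Y m i)) := fun j => by
  simp only [star_star, ← mul_apply_eq_vecMul]
  exact congrFun (h j) i

theorem SolEq1v.sub {u v : ℕ → Fin n → ℂ} (hu : SolEq1v d a b z u) (hv : SolEq1v d a b z v) :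
    SolEq1v d a b z (u - v) := fun j => by
  simp only [Pi.sub_apply, mulVec_sub]
  linear_combination (norm := module) hu j - hv j

theorem SolEq1v.eq_zero (ha : ∀ j, IsUnit (a j)) {v : ℕ → Fin n → ℂ} (h : SolEq1v d a b z v)
    (h0 : v 0 = 0) (h1 : v 1 = 0) : v = 0 := by
  suffices ∀ j, v j = 0 ∧ v (j + 1) = 0 from funext fun j => (this j).1
  intro j
  induction j with
  | zero => exact ⟨h0, h1⟩
  | succ j ih =>
    refine ⟨ih.2, ?_⟩
    have hj := h j
    rw [ih.1, ih.2, mulVec_zero, mulVec_zero, smul_zero, zero_add, zero_add] at hj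
    have := congrArg ((a j)⁻¹ *ᵥ ·) hj
    rwa [mulVec_mulVec, nonsing_inv_mul _ ((isUnit_iff_isUnit_det _).mp (ha j)), one_mulVec,
      mulVec_zero] at this

theorem wronskian_eq {X Y : ℕ → Mat n} (hX : SolEq2 d a b z X) (hY : SolEq1 d a b z Y) (j : ℕ) :
    X (j + 1) * Alo b j * Y j - X j * Aup a j * Y (j + 1) = X 0 * Y 1 - X 1 * Y 0 := by
  induction j with
  | zero => simp only [Alo, Aup]; noncomm_ring
  | succ j ih =>
    rw [← ih]
    have hY' : a j * Y (j + 2) = z • Y (j + 1) - Alo b j * Y j - d j * Y (j + 1) := by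
      rw [← hY j]; abel
    have hX' : X (j + 2) * b j = z • X (j + 1) - X j * Aup a j - X (j + 1) * d j := by
      rw [← hX j]; abel
    rw [show Alo b (j + 1) = b j from rfl, show Aup a (j + 1) = a j from rfl, hX',
      Matrix.mul_assoc (X (j + 1)), hY']
    simp only [Matrix.sub_mul, Matrix.mul_sub, Matrix.smul_mul, Matrix.mul_smul, Matrix.mul_assoc]
    abel

end Recurrence

noncomputable def greenKernel {n : ℕ} (d a b : ℕ → Mat n) (z : ℂ) (m k : ℕ) : Mat n :=
  fundSol1 d a b z 0 1 m * fundSol2 d a b z (-1) 0 k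
    - fundSol1 d a b z (-1) 0 m * fundSol2 d a b z 0 1 k

section Kernel

variable {n : ℕ} {d a b : ℕ → Mat n} {z : ℂ}

theorem solEq1_greenKernel (ha : ∀ j, IsUnit (a j)) (k : ℕ) :
    SolEq1 d a b z (fun m => greenKernel d a b z m k) := by
  intro j
  have hP := solEq1_fundSol1 (d := d) (b := b) (z := z) ha 0 1 j
  have hQ := solEq1_fundSol1 (d := d) (b := b) (z := z) ha (-1) 0 j
  simp only [greenKernel, Matrix.mul_sub, ← Matrix.mul_assoc, smul_sub, ← Matrix.smul_mul,
    ← hP, ← hQ, Matrix.add_mul]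
  abel

theorem greenKernel_self_and_mul_aup (ha : ∀ j, IsUnit (a j)) (hb : ∀ j, IsUnit (b j)) (j : ℕ) :
    greenKernel d a b z j j = 0 ∧ greenKernel d a b z (j + 1) j * Aup a j = 1 := by
  have hP := solEq1_fundSol1 (d := d) (b := b) (z := z) ha 0 1
  have hQ := solEq1_fundSol1 (d := d) (b := b) (z := z) ha (-1) 0
  have hPt := solEq2_fundSol2 (d := d) (a := a) (z := z) hb 0 1
  have hQt := solEq2_fundSol2 (d := d) (a := a) (z := z) hb (-1) 0
  exact Matrix.mul_sub_mul_of_wronskian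
    ((wronskian_eq hPt hP j).trans (by simp [fundSol1, fundSol2]))
    ((wronskian_eq hPt hQ j).trans (by simp [fundSol1, fundSol2]))
    ((wronskian_eq hQt hP j).trans (by simp [fundSol1, fundSol2]))
    ((wronskian_eq hQt hQ j).trans (by simp [fundSol1, fundSol2]))

theorem norm_greenKernel_le (m k : ℕ) :
    ‖greenKernel d a b z m k‖ ≤ (‖fundSol1 d a b z 0 1 m‖ + ‖fundSol1 d a b z (-1) 0 m‖)
      * (‖fundSol2 d a b z 0 1 k‖ + ‖fundSol2 d a b z (-1) 0 k‖) := by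
  refine (norm_sub_le _ _).trans ?_
  have h₁ := linfty_opNorm_mul (fundSol1 d a b z 0 1 m) (fundSol2 d a b z (-1) 0 k)
  have h₂ := linfty_opNorm_mul (fundSol1 d a b z (-1) 0 m) (fundSol2 d a b z 0 1 k)
  nlinarith [norm_nonneg (fundSol1 d a b z 0 1 m), norm_nonneg (fundSol1 d a b z (-1) 0 m),
    norm_nonneg (fundSol2 d a b z 0 1 k), norm_nonneg (fundSol2 d a b z (-1) 0 k)]

end Kernel

def duhamelSum {n : ℕ} (K : ℕ → ℕ → Mat n) (f : ℕ → Fin n → ℂ) (m : ℕ) : Fin n → ℂ :=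
  ∑ k ∈ Finset.range m, K m k *ᵥ f k

section Duhamel

open Finset

variable {n : ℕ} {d a b : ℕ → Mat n} {z : ℂ} {K : ℕ → ℕ → Mat n}

theorem duhamelSum_rec (hK : ∀ k, SolEq1 d a b z (fun m => K m k)) (hKself : ∀ j, K j j = 0)
    (hKsucc : ∀ j, a j * K (j + 2) (j + 1) = 1) (f : ℕ → Fin n → ℂ) (j : ℕ) :
    Alo b j *ᵥ duhamelSum K f j + d j *ᵥ duhamelSum K f (j + 1) + a j *ᵥ duhamelSum K f (j + 2)
      = z • duhamelSum K f (j + 1) + f (j + 1) := by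
  have hcol : ∀ k, Alo b j *ᵥ (K j k *ᵥ f k) + d j *ᵥ (K (j + 1) k *ᵥ f k)
      + a j *ᵥ (K (j + 2) k *ᵥ f k) = z • (K (j + 1) k *ᵥ f k) :=
    fun k => (hK k).solEq1v_mulVec (f k) j
  simp only [duhamelSum, sum_range_succ, mulVec_add, mulVec_sum, smul_add, smul_sum, ← hcol,
    sum_add_distrib, hKself, zero_mulVec, mulVec_zero, zero_add]
  rw [mulVec_mulVec (f (j + 1)), hKsucc, one_mulVec]
  abel

theorem eq_add_duhamelSum (ha : ∀ j, IsUnit (a j)) (hK : ∀ k, SolEq1 d a b z (fun m => K m k))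
    (hKself : ∀ j, K j j = 0) (hKsucc : ∀ j, a j * K (j + 2) (j + 1) = 1)
    {u w f : ℕ → Fin n → ℂ} (hf : f 0 = 0)
    (hu : ∀ j, Alo b j *ᵥ u j + d j *ᵥ u (j + 1) + a j *ᵥ u (j + 2) = z • u (j + 1) + f (j + 1))
    (hw : SolEq1v d a b z w) (hw₀ : w 0 = u 0) (hw₁ : w 1 = u 1) :
    u = w + duhamelSum K f := by
  refine (sub_eq_zero.mp (SolEq1v.eq_zero (d := d) (b := b) (z := z) ha (fun j => ?_) ?_ ?_)).symm
  · have := duhamelSum_rec hK hKself hKsucc f j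
    simp only [Pi.sub_apply, Pi.add_apply, mulVec_sub, mulVec_add]
    linear_combination (norm := module) hw j + this - hu j
  · simp [duhamelSum, hw₀]
  · simp [duhamelSum, hw₁, hf]

end Duhamel

section Summability

open Finset

variable {n : ℕ} {d a b : ℕ → Mat n} {z z₀ : ℂ} {p q : ℝ≥0∞}

theorem memℓp_of_solEq1 (h1 : ∀ u, SolEq1v d a b z u → Memℓp u p) {Y : ℕ → Mat n}
    (hY : SolEq1 d a b z Y) : Memℓp Y p :=
  memℓp_of_forall_memℓp_apply fun i j =>
    (h1 _ (hY.solEq1v_mulVec (Pi.single j 1))).mono' fun t => by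
      simpa [mulVec_single_one] using norm_le_pi_norm (Y t *ᵥ Pi.single j 1) i

theorem memℓp_of_solEq2 (h2 : ∀ v, SolEq2v d a b z v → Memℓp v q) {Y : ℕ → Mat n}
    (hY : SolEq2 d a b z Y) : Memℓp Y q :=
  memℓp_of_forall_memℓp_apply fun i j =>
    (h2 _ (hY.solEq2v_star_row i)).mono' fun t => by
      simpa using norm_le_pi_norm (star (Y t i)) j

-- (1v) at `z` is (1v) at `z₀` forced by `(z - z₀) u`; the value of the forcing at `0` never enters
theorem SolEq1v.eq_add_duhamelSum_greenKernel (ha : ∀ j, IsUnit (a j)) (hb : ∀ j, IsUnit (b j))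
    {u : ℕ → Fin n → ℂ} (hu : SolEq1v d a b z u) (z₀ : ℂ) :
    u = (fun m => fundSol1 d a b z₀ 0 1 m *ᵥ u 1 - fundSol1 d a b z₀ (-1) 0 m *ᵥ u 0)
      + duhamelSum (greenKernel d a b z₀) (fun k => if k = 0 then 0 else (z - z₀) • u k) :=
  eq_add_duhamelSum ha (solEq1_greenKernel ha)
    (fun j => (greenKernel_self_and_mul_aup ha hb j).1)
    (fun j => mul_eq_one_comm.mp (greenKernel_self_and_mul_aup ha hb (j + 1)).2) (if_pos rfl)
    (fun j => by simp [hu j, sub_smul])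
    (((solEq1_fundSol1 ha 0 1).solEq1v_mulVec (u 1)).sub
      ((solEq1_fundSol1 ha (-1) 0).solEq1v_mulVec (u 0)))
    (by simp [fundSol1, neg_mulVec]) (by simp [fundSol1])

theorem memℓp_of_solEq1v [p.HolderConjugate q] (ha : ∀ j, IsUnit (a j))
    (hb : ∀ j, IsUnit (b j)) (h1 : ∀ u, SolEq1v d a b z₀ u → Memℓp u p)
    (h2 : ∀ v, SolEq2v d a b z₀ v → Memℓp v q) {u : ℕ → Fin n → ℂ} (hu : SolEq1v d a b z u) :
    Memℓp u p := by
  set P := fundSol1 d a b z₀ 0 1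
  set Q := fundSol1 d a b z₀ (-1) 0
  set K := greenKernel d a b z₀
  set f : ℕ → Fin n → ℂ := fun k => if k = 0 then 0 else (z - z₀) • u k
  set α : ℕ → ℝ := fun m => ‖P m‖ + ‖Q m‖
  set β : ℕ → ℝ := fun k =>
    ‖z - z₀‖ * (‖fundSol2 d a b z₀ 0 1 k‖ + ‖fundSol2 d a b z₀ (-1) 0 k‖)
  have hα : Memℓp α p := (memℓp_of_solEq1 h1 (solEq1_fundSol1 ha 0 1)).norm.add
    (memℓp_of_solEq1 h1 (solEq1_fundSol1 ha (-1) 0)).norm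
  have hβ : Memℓp β q := ((memℓp_of_solEq2 h2 (solEq2_fundSol2 hb 0 1)).norm.add
    (memℓp_of_solEq2 h2 (solEq2_fundSol2 hb (-1) 0)).norm).const_mul _
  have hw : ∀ m, ‖P m *ᵥ u 1 - Q m *ᵥ u 0‖ ≤ α m * (‖u 0‖ + ‖u 1‖) := fun m => by
    have := (norm_sub_le _ _).trans
      (add_le_add (linfty_opNorm_mulVec (P m) (u 1)) (linfty_opNorm_mulVec (Q m) (u 0)))
    nlinarith [norm_nonneg (P m), norm_nonneg (Q m), norm_nonneg (u 0), norm_nonneg (u 1)]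
  have hf : ∀ k, ‖f k‖ ≤ ‖z - z₀‖ * ‖u k‖ := fun k => by
    simp only [f]
    split_ifs
    · rw [norm_zero]; positivity
    · rw [norm_smul]
  have hK : ∀ m k, ‖K m k *ᵥ f k‖ ≤ α m * (β k * ‖u k‖) := fun m k =>
    calc ‖K m k *ᵥ f k‖ ≤ ‖K m k‖ * ‖f k‖ := linfty_opNorm_mulVec _ _
      _ ≤ (α m * (‖fundSol2 d a b z₀ 0 1 k‖ + ‖fundSol2 d a b z₀ (-1) 0 k‖))
          * (‖z - z₀‖ * ‖u k‖) :=
        mul_le_mul (norm_greenKernel_le m k) (hf k) (norm_nonneg _) (by positivity)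
      _ = α m * (β k * ‖u k‖) := by ring
  have hbound : ∀ m, ‖u m‖ ≤ α m * ((‖u 0‖ + ‖u 1‖) + ∑ k ∈ range m, β k * ‖u k‖) := fun m =>
    calc ‖u m‖ = ‖P m *ᵥ u 1 - Q m *ᵥ u 0 + duhamelSum K f m‖ := by
          rw [congrFun (hu.eq_add_duhamelSum_greenKernel ha hb z₀) m]; rfl
      _ ≤ α m * (‖u 0‖ + ‖u 1‖) + ∑ k ∈ range m, α m * (β k * ‖u k‖) :=
        (norm_add_le _ _).trans
          (add_le_add (hw m) ((norm_sum_le _ _).trans (sum_le_sum fun k _ => hK m k)))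
      _ = _ := by rw [← mul_sum, ← mul_add]
  exact Memℓp.mono (hα.const_mul _) (le_mul_exp_of_le_mul_add_sum (fun _ => by positivity)
    (fun _ => by positivity) (by positivity) (hα.summable_mul hβ) hbound)

theorem solEq2v_iff_solEq1v_transpose {v : ℕ → Fin n → ℂ} :
    SolEq2v d a b z v ↔ SolEq1v (fun j => (d j)ᵀ) (fun j => (b j)ᵀ) (fun j => (a j)ᵀ) z
      (fun m => star (v m)) := by
  have hAlo : ∀ j, Alo (fun i => (a i)ᵀ) j = (Aup a j)ᵀ := fun j => by cases j <;> simp [Alo, Aup]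
  simp only [SolEq2v, SolEq1v, hAlo, mulVec_transpose]

theorem memℓp_of_solEq2v [p.HolderConjugate q] (ha : ∀ j, IsUnit (a j))
    (hb : ∀ j, IsUnit (b j)) (h1 : ∀ u, SolEq1v d a b z₀ u → Memℓp u p)
    (h2 : ∀ v, SolEq2v d a b z₀ v → Memℓp v q) {v : ℕ → Fin n → ℂ} (hv : SolEq2v d a b z v) :
    Memℓp v q := by
  have h1' : ∀ u, SolEq1v (fun j => (d j)ᵀ) (fun j => (b j)ᵀ) (fun j => (a j)ᵀ) z₀ u →
      Memℓp u q := fun u hu =>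
    Memℓp.star_iff.mp (h2 _ (solEq2v_iff_solEq1v_transpose.mpr (by simpa using hu)))
  have h2' : ∀ v, SolEq2v (fun j => (d j)ᵀ) (fun j => (b j)ᵀ) (fun j => (a j)ᵀ) z₀ v →
      Memℓp v p := fun v hv =>
    Memℓp.star_iff.mp (h1 (star v) (solEq2v_iff_solEq1v_transpose.mp hv))
  exact Memℓp.star_iff.mp (memℓp_of_solEq1v (by simpa using hb) (by simpa using ha) h1' h2'
    (solEq2v_iff_solEq1v_transpose.mp hv))

end Summability

theorem statement9_general {n : ℕ} (d a b : ℕ → Mat n)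
    (ha : ∀ j, IsUnit (a j)) (hb : ∀ j, IsUnit (b j))
    (p q : ℝ≥0∞) (hpq : 1 / p + 1 / q = 1) (z0 : ℂ)
    (h1 : ∀ u : ℕ → Fin n → ℂ, SolEq1v d a b z0 u → Memℓp u p)
    (h2 : ∀ v : ℕ → Fin n → ℂ, SolEq2v d a b z0 v → Memℓp v q)
    (z : ℂ) :
    (∀ u : ℕ → Fin n → ℂ, SolEq1v d a b z u → Memℓp u p) ∧
    (∀ v : ℕ → Fin n → ℂ, SolEq2v d a b z v → Memℓp v q) := by
  have : p.HolderConjugate q := ENNReal.holderConjugate_iff.mpr (by simpa only [one_div] using hpq)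
  exact ⟨fun _ => memℓp_of_solEq1v ha hb h1 h2, fun _ => memℓp_of_solEq2v ha hb h1 h2⟩

/-- Theorem 1: if for some `z₀` all solutions of (1v) are in `l^p_n` and
all solutions of (2v) are in `l^q_n` (`1/p + 1/q = 1`), then the same holds for every
`z ∈ ℂ`. -/
theorem statement9 {n : ℕ} (hn : 1 ≤ n) (d a b : ℕ → Mat n)
    (ha : ∀ j, IsUnit (a j)) (hb : ∀ j, IsUnit (b j))
    (p q : ℝ≥0∞) (hp : 1 ≤ p) (hpq : 1 / p + 1 / q = 1) (z0 : ℂ)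
    (h1 : ∀ u : ℕ → Fin n → ℂ, SolEq1v d a b z0 u → Memℓp u p)
    (h2 : ∀ v : ℕ → Fin n → ℂ, SolEq2v d a b z0 v → Memℓp v q)
    (z : ℂ) :
    (∀ u : ℕ → Fin n → ℂ, SolEq1v d a b z u → Memℓp u p) ∧
    (∀ v : ℕ → Fin n → ℂ, SolEq2v d a b z v → Memℓp v q) :=
  statement9_general d a b ha hb p q hpq z0 h1 h2 z
end
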